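/- arXiv:1510.02769 — 3 statements merged into one kernel-verified Lean document; each statement's English description precedes it below -/
import Mathlib

section
/- On n qubits, the permutation operator W_{(1234)} for the 4-cycle satisfies W_{(1234)} = 2^{-3n} Σ_{p_1,p_2,p_3 ∈ P_n} p_1 ⊗ p_2 ⊗ p_3 ⊗ p_3 p_2 p_1, and W_{(12)(34)} = 2^{-2n} Σ_{p_1,p_2 ∈ P_n} p_1 ⊗ p_1 ⊗ p_2 ⊗ p_2. -/
open Matrix
open scoped Kronecker

noncomputable def pauliQ (n : ℕ) (a b : Fin n → ZMod 2) :
    Matrix (Fin n → ZMod 2) (Fin n → ZMod 2) ℂ :=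
  Matrix.of fun k j => if k = j + a then
    Complex.I ^ (∑ i, (a i).val * (b i).val) *
      (-1 : ℂ) ^ (∑ i, (b i).val * (j i).val) else 0

def W1234 (n : ℕ) :
    Matrix ((Fin n → ZMod 2) × (Fin n → ZMod 2) × (Fin n → ZMod 2) × (Fin n → ZMod 2))
      ((Fin n → ZMod 2) × (Fin n → ZMod 2) × (Fin n → ZMod 2) × (Fin n → ZMod 2)) ℂ :=
  Matrix.of fun k j =>
    if k.1 = j.2.2.2 ∧ k.2.1 = j.1 ∧ k.2.2.1 = j.2.1 ∧ k.2.2.2 = j.2.2.1 then 1 else 0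

def W12_34 (n : ℕ) :
    Matrix ((Fin n → ZMod 2) × (Fin n → ZMod 2) × (Fin n → ZMod 2) × (Fin n → ZMod 2))
      ((Fin n → ZMod 2) × (Fin n → ZMod 2) × (Fin n → ZMod 2) × (Fin n → ZMod 2)) ℂ :=
  Matrix.of fun k j =>
    if k.1 = j.2.1 ∧ k.2.1 = j.1 ∧ k.2.2.1 = j.2.2.2 ∧ k.2.2.2 = j.2.2.1 then 1 else 0

namespace PauliAux

variable {n : ℕ}

/-- sign character -/
noncomputable def sg (b v : Fin n → ZMod 2) : ℂ :=
  (-1 : ℂ) ^ (∑ i, (b i).val * (v i).val)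

/-- phase -/
noncomputable def ph (a b : Fin n → ZMod 2) : ℂ :=
  Complex.I ^ (∑ i, (a i).val * (b i).val)

lemma pauliQ_eq (a b : Fin n → ZMod 2) :
    pauliQ n a b = Matrix.of fun k j => if k = j + a then ph a b * sg b j else 0 := rfl

/-- pointwise version of `sg` -/
noncomputable def s2 (x : ZMod 2) : ℂ := (-1 : ℂ) ^ x.val

lemma sg_eq_prod (b v : Fin n → ZMod 2) : sg b v = ∏ i, s2 (b i * v i) := by
  simp only [sg, s2]
  rw [Finset.prod_pow_eq_pow_sum]
  congr 1
  refine Finset.sum_congr rfl fun i _ => ?_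
  have h : ∀ x y : ZMod 2, (x * y).val = x.val * y.val := by decide
  rw [h]

lemma s2_add (x y : ZMod 2) : s2 (x + y) = s2 x * s2 y := by
  have h : ∀ z : ZMod 2, z = 0 ∨ z = 1 := by decide
  have h2 : (1 : ZMod 2) + 1 = 0 := by decide
  rcases h x with rfl | rfl <;> rcases h y with rfl | rfl <;>
    simp [s2, h2, ZMod.val_one]

lemma sg_add (b u v : Fin n → ZMod 2) : sg b (u + v) = sg b u * sg b v := by
  rw [sg_eq_prod, sg_eq_prod, sg_eq_prod, ← Finset.prod_mul_distrib]
  refine Finset.prod_congr rfl fun i _ => ?_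
  rw [Pi.add_apply, mul_add, s2_add]

lemma ph_mul_ph (a b : Fin n → ZMod 2) : ph a b * ph a b = sg b a := by
  rw [ph, sg, ← pow_add, ← two_mul, pow_mul, Complex.I_sq]
  congr 1
  exact Finset.sum_congr rfl fun i _ => mul_comm _ _

lemma sum_sg (v : Fin n → ZMod 2) :
    (∑ b : Fin n → ZMod 2, sg b v) = if v = 0 then (2 : ℂ) ^ n else 0 := by
  have key : (∑ b : Fin n → ZMod 2, sg b v) = ∏ i, ∑ x : ZMod 2, s2 (x * v i) := by
    simp only [sg_eq_prod]
    rw [Finset.prod_univ_sum]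
    simp
  rw [key]
  by_cases hv : v = 0
  · subst hv
    simp [s2]
  · obtain ⟨i, hi⟩ : ∃ i, v i ≠ 0 := by
      by_contra h
      push_neg at h
      exact hv (funext fun i => h i)
    refine Eq.trans (Finset.prod_eq_zero (Finset.mem_univ i) ?_) (by simp [hv])
    have h1 : v i = 1 := by
      have : ∀ z : ZMod 2, z ≠ 0 → z = 1 := by decide
      exact this _ hi
    rw [show (∑ x : ZMod 2, s2 (x * v i)) = s2 (0 * v i) + s2 (1 * v i) from
      Fin.sum_univ_two _]
    simp [h1, s2, ZMod.val_one]

lemma sum_ph_sg (c u v : Fin n → ZMod 2) :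
    (∑ b : Fin n → ZMod 2, ph c b * sg b u * (ph c b * sg b v)) =
      if c + (u + v) = 0 then (2 : ℂ) ^ n else 0 := by
  rw [← sum_sg]
  refine Finset.sum_congr rfl fun b _ => ?_
  rw [sg_add, sg_add, ← ph_mul_ph c b]
  ring

lemma eq_add_iff' (x y z : Fin n → ZMod 2) : x = y + z ↔ z = x + y := by
  simp only [funext_iff, Pi.add_apply]
  refine forall_congr' fun i => ?_
  have : ∀ a b c : ZMod 2, a = b + c ↔ c = a + b := by decide
  exact this _ _ _

lemma cond_rw (x y : Fin n → ZMod 2) :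
    ∀ z : Fin n → ZMod 2, (x = y + z) = (z = x + y) :=
  fun z => propext (eq_add_iff' x y z)

lemma pauli_mul_delta (a b c : Fin n → ZMod 2) (f : (Fin n → ZMod 2) → ℂ) :
    pauliQ n a b * (Matrix.of fun k j => if k = j + c then f j else 0) =
    Matrix.of fun k j =>
      if k = j + (c + a) then ph a b * sg b (j + c) * f j else 0 := by
  ext k j
  rw [Matrix.mul_apply]
  simp only [pauliQ_eq, Matrix.of_apply, ite_zero_mul_ite_zero]
  rw [Finset.sum_eq_single (j + c)]
  · simp [add_assoc]
  · intro m _ hm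
    simp [hm]
  · simp

lemma triple (a1 b1 a2 b2 a3 b3 : Fin n → ZMod 2) :
    pauliQ n a3 b3 * pauliQ n a2 b2 * pauliQ n a1 b1 =
    Matrix.of fun k j => if k = j + (a1 + a2 + a3) then
      ph a3 b3 * sg b3 (j + (a1 + a2)) *
        (ph a2 b2 * sg b2 (j + a1) * (ph a1 b1 * sg b1 j)) else 0 := by
  rw [mul_assoc, pauliQ_eq a1 b1, pauli_mul_delta a2 b2 a1, pauli_mul_delta a3 b3 (a1 + a2)]

lemma sum_if_pull {P : Prop} [Decidable P] {f : (Fin n → ZMod 2) → ℂ} :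
    (∑ x : Fin n → ZMod 2, if P then f x else 0) =
      if P then ∑ x : Fin n → ZMod 2, f x else 0 := by
  split_ifs <;> simp

lemma sum2_mul (f g : (Fin n → ZMod 2) → ℂ) :
    (∑ x : Fin n → ZMod 2, f x) * (∑ y : Fin n → ZMod 2, g y) =
    ∑ x : Fin n → ZMod 2, ∑ y : Fin n → ZMod 2, f x * g y := by
  rw [Finset.sum_mul]
  refine Finset.sum_congr rfl fun x _ => ?_
  rw [Finset.mul_sum]

lemma sum3_mul (f g h : (Fin n → ZMod 2) → ℂ) :
    (∑ x : Fin n → ZMod 2, f x) *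
      ((∑ y : Fin n → ZMod 2, g y) * (∑ z : Fin n → ZMod 2, h z)) =
    ∑ x : Fin n → ZMod 2, ∑ y : Fin n → ZMod 2, ∑ z : Fin n → ZMod 2,
      f x * (g y * h z) := by
  rw [sum2_mul g h, Finset.sum_mul]
  refine Finset.sum_congr rfl fun x _ => ?_
  rw [Finset.mul_sum]
  refine Finset.sum_congr rfl fun y _ => ?_
  rw [Finset.mul_sum]

lemma cond_iff1 (k1 k2 k3 k4 j1 j2 j3 j4 : Fin n → ZMod 2) :
    (k4 = j4 + (k1 + j1 + (k2 + j2) + (k3 + j3)) ∧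
      k1 + j1 + (j1 + j4) = 0 ∧
      k2 + j2 + (j2 + (j4 + (k1 + j1))) = 0 ∧
      k3 + j3 + (j3 + (j4 + (k1 + j1 + (k2 + j2)))) = 0) ↔
    (k1 = j4 ∧ k2 = j1 ∧ k3 = j2 ∧ k4 = j3) := by
  simp only [funext_iff, Pi.add_apply, Pi.zero_apply, ← forall_and]
  refine forall_congr' fun i => ?_
  generalize k1 i = x1; generalize k2 i = x2; generalize k3 i = x3; generalize k4 i = x4
  generalize j1 i = y1; generalize j2 i = y2; generalize j3 i = y3; generalize j4 i = y4
  revert x1 x2 x3 x4 y1 y2 y3 y4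
  decide

lemma key1 (k1 k2 k3 k4 j1 j2 j3 j4 : Fin n → ZMod 2) :
    (∑ a1 : Fin n → ZMod 2, ∑ b1 : Fin n → ZMod 2, ∑ a2 : Fin n → ZMod 2,
      ∑ b2 : Fin n → ZMod 2, ∑ a3 : Fin n → ZMod 2, ∑ b3 : Fin n → ZMod 2,
      (if a1 = k1 + j1 then ph a1 b1 * sg b1 j1 else 0) *
      ((if a2 = k2 + j2 then ph a2 b2 * sg b2 j2 else 0) *
       ((if a3 = k3 + j3 then ph a3 b3 * sg b3 j3 else 0) *
        (if k4 = j4 + (a1 + a2 + a3) then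
           ph a3 b3 * sg b3 (j4 + (a1 + a2)) *
             (ph a2 b2 * sg b2 (j4 + a1) * (ph a1 b1 * sg b1 j4)) else 0)))) =
    if k1 = j4 ∧ k2 = j1 ∧ k3 = j2 ∧ k4 = j3 then (2 : ℂ) ^ (3 * n) else 0 := by
  refine Eq.trans (Fintype.sum_eq_single (k1 + j1) fun a1 ha1 =>
    Finset.sum_eq_zero fun b1 _ => Finset.sum_eq_zero fun a2 _ =>
    Finset.sum_eq_zero fun b2 _ => Finset.sum_eq_zero fun a3 _ =>
    Finset.sum_eq_zero fun b3 _ => by simp [ha1]) ?_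
  refine Eq.trans (Finset.sum_congr rfl fun b1 _ =>
    (Fintype.sum_eq_single (k2 + j2) fun a2 ha2 =>
      Finset.sum_eq_zero fun b2 _ => Finset.sum_eq_zero fun a3 _ =>
      Finset.sum_eq_zero fun b3 _ => by simp [ha2])) ?_
  refine Eq.trans (Finset.sum_congr rfl fun b1 _ => Finset.sum_congr rfl fun b2 _ =>
    (Fintype.sum_eq_single (k3 + j3) fun a3 ha3 =>
      Finset.sum_eq_zero fun b3 _ => by simp [ha3])) ?_
  simp only [eq_self_iff_true, if_true]
  by_cases hC : k4 = j4 + (k1 + j1 + (k2 + j2) + (k3 + j3))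
  · simp only [if_pos hC]
    refine Eq.trans (Finset.sum_congr rfl fun b1 _ => Finset.sum_congr rfl fun b2 _ =>
      Finset.sum_congr rfl fun b3 _ =>
      (by ring :
        ph (k1 + j1) b1 * sg b1 j1 *
          (ph (k2 + j2) b2 * sg b2 j2 *
            (ph (k3 + j3) b3 * sg b3 j3 *
              (ph (k3 + j3) b3 * sg b3 (j4 + (k1 + j1 + (k2 + j2))) *
                (ph (k2 + j2) b2 * sg b2 (j4 + (k1 + j1)) *
                  (ph (k1 + j1) b1 * sg b1 j4))))) =
        ph (k1 + j1) b1 * sg b1 j1 * (ph (k1 + j1) b1 * sg b1 j4) *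
          (ph (k2 + j2) b2 * sg b2 j2 * (ph (k2 + j2) b2 * sg b2 (j4 + (k1 + j1))) *
            (ph (k3 + j3) b3 * sg b3 j3 *
              (ph (k3 + j3) b3 * sg b3 (j4 + (k1 + j1 + (k2 + j2)))))))) ?_
    rw [← sum3_mul, sum_ph_sg, sum_ph_sg, sum_ph_sg]
    simp only [ite_zero_mul_ite_zero]
    refine if_congr ?_ ?_ rfl
    · constructor
      · exact fun h => (cond_iff1 k1 k2 k3 k4 j1 j2 j3 j4).1 ⟨hC, h⟩
      · exact fun h => ((cond_iff1 k1 k2 k3 k4 j1 j2 j3 j4).2 h).2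
    · rw [← pow_add, ← pow_add]
      congr 1
      ring
  · simp only [if_neg hC, mul_zero, Finset.sum_const_zero]
    rw [if_neg fun hT => hC ((cond_iff1 k1 k2 k3 k4 j1 j2 j3 j4).2 hT).1]

lemma cond_iff2 (k1 k2 k3 k4 j1 j2 j3 j4 : Fin n → ZMod 2) :
    (k2 = j2 + (k1 + j1) ∧ k4 = j4 + (k3 + j3) ∧
      k1 + j1 + (j1 + j2) = 0 ∧ k3 + j3 + (j3 + j4) = 0) ↔
    (k1 = j2 ∧ k2 = j1 ∧ k3 = j4 ∧ k4 = j3) := by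
  simp only [funext_iff, Pi.add_apply, Pi.zero_apply, ← forall_and]
  refine forall_congr' fun i => ?_
  generalize k1 i = x1; generalize k2 i = x2; generalize k3 i = x3; generalize k4 i = x4
  generalize j1 i = y1; generalize j2 i = y2; generalize j3 i = y3; generalize j4 i = y4
  revert x1 x2 x3 x4 y1 y2 y3 y4
  decide

lemma key2 (k1 k2 k3 k4 j1 j2 j3 j4 : Fin n → ZMod 2) :
    (∑ a1 : Fin n → ZMod 2, ∑ b1 : Fin n → ZMod 2, ∑ a2 : Fin n → ZMod 2,
      ∑ b2 : Fin n → ZMod 2,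
      (if a1 = k1 + j1 then ph a1 b1 * sg b1 j1 else 0) *
      ((if k2 = j2 + a1 then ph a1 b1 * sg b1 j2 else 0) *
       ((if a2 = k3 + j3 then ph a2 b2 * sg b2 j3 else 0) *
        (if k4 = j4 + a2 then ph a2 b2 * sg b2 j4 else 0)))) =
    if k1 = j2 ∧ k2 = j1 ∧ k3 = j4 ∧ k4 = j3 then (2 : ℂ) ^ (2 * n) else 0 := by
  refine Eq.trans (Fintype.sum_eq_single (k1 + j1) fun a1 ha1 =>
    Finset.sum_eq_zero fun b1 _ => Finset.sum_eq_zero fun a2 _ =>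
    Finset.sum_eq_zero fun b2 _ => by simp [ha1]) ?_
  refine Eq.trans (Finset.sum_congr rfl fun b1 _ =>
    (Fintype.sum_eq_single (k3 + j3) fun a2 ha2 =>
      Finset.sum_eq_zero fun b2 _ => by simp [ha2])) ?_
  simp only [eq_self_iff_true, if_true]
  by_cases hA : k2 = j2 + (k1 + j1)
  · by_cases hB : k4 = j4 + (k3 + j3)
    · simp only [if_pos hA, if_pos hB]
      refine Eq.trans (Finset.sum_congr rfl fun b1 _ => Finset.sum_congr rfl fun b2 _ =>
        (by ring :
          ph (k1 + j1) b1 * sg b1 j1 *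
            (ph (k1 + j1) b1 * sg b1 j2 *
              (ph (k3 + j3) b2 * sg b2 j3 * (ph (k3 + j3) b2 * sg b2 j4))) =
          ph (k1 + j1) b1 * sg b1 j1 * (ph (k1 + j1) b1 * sg b1 j2) *
            (ph (k3 + j3) b2 * sg b2 j3 * (ph (k3 + j3) b2 * sg b2 j4)))) ?_
      rw [← sum2_mul, sum_ph_sg, sum_ph_sg]
      simp only [ite_zero_mul_ite_zero]
      refine if_congr ?_ ?_ rfl
      · constructor
        · exact fun h => (cond_iff2 k1 k2 k3 k4 j1 j2 j3 j4).1 ⟨hA, hB, h⟩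
        · exact fun h => ((cond_iff2 k1 k2 k3 k4 j1 j2 j3 j4).2 h).2.2
      · rw [← pow_add]
        congr 1
        ring
    · simp only [if_neg hB, mul_zero, Finset.sum_const_zero]
      rw [if_neg fun hT => hB ((cond_iff2 k1 k2 k3 k4 j1 j2 j3 j4).2 hT).2.1]
  · simp only [if_neg hA, mul_zero, zero_mul, Finset.sum_const_zero]
    rw [if_neg fun hT => hA ((cond_iff2 k1 k2 k3 k4 j1 j2 j3 j4).2 hT).1]

end PauliAux

open PauliAux in
/-- On `n` qubits, `W_{(1234)} = 2^{-3n} Σ_{p₁,p₂,p₃ ∈ P_n} p₁ ⊗ p₂ ⊗ p₃ ⊗ p₃p₂p₁` and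
`W_{(12)(34)} = 2^{-2n} Σ_{p₁,p₂ ∈ P_n} p₁ ⊗ p₁ ⊗ p₂ ⊗ p₂`. -/
theorem fourcycle_eq_pauli_sum (n : ℕ) :
    W1234 n = ((2 : ℂ) ^ (3 * n))⁻¹ •
      ∑ a₁ : Fin n → ZMod 2, ∑ b₁ : Fin n → ZMod 2, ∑ a₂ : Fin n → ZMod 2,
        ∑ b₂ : Fin n → ZMod 2, ∑ a₃ : Fin n → ZMod 2, ∑ b₃ : Fin n → ZMod 2,
        pauliQ n a₁ b₁ ⊗ₖ (pauliQ n a₂ b₂ ⊗ₖ (pauliQ n a₃ b₃ ⊗ₖ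
          (pauliQ n a₃ b₃ * pauliQ n a₂ b₂ * pauliQ n a₁ b₁))) ∧
    W12_34 n = ((2 : ℂ) ^ (2 * n))⁻¹ •
      ∑ a₁ : Fin n → ZMod 2, ∑ b₁ : Fin n → ZMod 2, ∑ a₂ : Fin n → ZMod 2,
        ∑ b₂ : Fin n → ZMod 2,
        pauliQ n a₁ b₁ ⊗ₖ (pauliQ n a₁ b₁ ⊗ₖ (pauliQ n a₂ b₂ ⊗ₖ pauliQ n a₂ b₂)) := by
  have h2n : ∀ m : ℕ, ((2 : ℂ) ^ m) ≠ 0 := fun m => pow_ne_zero m two_ne_zero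
  constructor
  · ext ⟨k1, k2, k3, k4⟩ ⟨j1, j2, j3, j4⟩
    simp only [triple]
    simp only [Matrix.smul_apply, Matrix.sum_apply, smul_eq_mul,
      Matrix.kroneckerMap_apply, pauliQ_eq, Matrix.of_apply]
    simp only [cond_rw k1 j1, cond_rw k2 j2, cond_rw k3 j3]
    rw [key1]
    simp only [W1234, Matrix.of_apply]
    by_cases hT : k1 = j4 ∧ k2 = j1 ∧ k3 = j2 ∧ k4 = j3
    · simp only [if_pos hT]
      rw [inv_mul_cancel₀ (h2n _)]
    · simp only [if_neg hT, mul_zero]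
  · ext ⟨k1, k2, k3, k4⟩ ⟨j1, j2, j3, j4⟩
    simp only [Matrix.smul_apply, Matrix.sum_apply, smul_eq_mul,
      Matrix.kroneckerMap_apply, pauliQ_eq, Matrix.of_apply]
    simp only [cond_rw k1 j1, cond_rw k3 j3]
    rw [key2]
    simp only [W12_34, Matrix.of_apply]
    by_cases hT : k1 = j2 ∧ k2 = j1 ∧ k3 = j4 ∧ k4 = j3
    · simp only [if_pos hT]
      rw [inv_mul_cancel₀ (h2n _)]
    · simp only [if_neg hT, mul_zero]
end

section
/- An operator X on (C^d)^{⊗k} commutes with U^{⊗k} for all unitaries U if and only if X is a linear combination of the permutation operators W_π, π ∈ S_k. -/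
/-!
Permutation operators commute with every `Y^{⊗k}`, which gives one direction. For the other, the
condition `X * U^{⊗k} = U^{⊗k} * X` is polynomial in the entries of `U`, and the unitaries are
Zariski dense: diagonal unitaries fill a product of circles, so `X` commutes with `D^{⊗k}` for
every diagonal `D`; unitary conjugation then gives every Hermitian `H`, and the line `A + t • B`
(`t` real, `A` and `B` the real and imaginary parts of `Y`) reaches every `Y`.
The matrices commuting with all `W_π` are the symmetric tensors, and these are spanned by the
`Y^{⊗k}`: a functional killing every `Y^{⊗k}` gives a vanishing polynomial whose coefficients are
its sums over `S_k`-orbits. So `X` commutes with the commutant of the `S_k`-action, and by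
Maschke's theorem and the Jacobson density theorem it lies in the span of the `W_π`.
-/

open Matrix

/-- The `k`-fold tensor power `Y^{⊗k}` of an operator `Y` on `ℂ^d`. -/
def tensorPow (d k : ℕ) (Y : Matrix (Fin d) (Fin d) ℂ) :
    Matrix (Fin k → Fin d) (Fin k → Fin d) ℂ :=
  Matrix.of fun j i => ∏ t, Y (j t) (i t)

/-- The permutation operator `W_π` on `(ℂ^d)^{⊗k}`. -/
def permOp (d k : ℕ) (π : Equiv.Perm (Fin k)) :
    Matrix (Fin k → Fin d) (Fin k → Fin d) ℂ :=
  Matrix.of fun j i => if j = i ∘ π.symm then 1 else 0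

open Finset

section Occurrences

variable {α : Type*} {k : ℕ}

noncomputable def occurrences (f : Fin k → α) : α →₀ ℕ := ∑ t, Finsupp.single (f t) 1

lemma occurrences_apply (f : Fin k → α) (a : α) :
    occurrences f a = Nat.card {t // f t = a} := by
  classical
  rw [occurrences, Finsupp.finsetSum_apply, Nat.card_eq_fintype_card, Fintype.card_subtype,
    card_filter]
  simp [Finsupp.single_apply]

lemma exists_perm_of_occurrences_eq {f g : Fin k → α} (h : occurrences f = occurrences g) :
    ∃ σ : Equiv.Perm (Fin k), f = g ∘ σ := by
  have hcard (a : α) : Nat.card {t // f t = a} = Nat.card {t // g t = a} := by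
    rw [← occurrences_apply, ← occurrences_apply, h]
  exact ⟨.ofFiberEquiv fun a => (Finite.card_eq.mp (hcard a)).some,
    funext fun t => (Equiv.ofFiberEquiv_map _ t).symm⟩

lemma prod_X_comp_eq_monomial {K : Type*} [CommSemiring K] (f : Fin k → α) :
    ∏ t, (MvPolynomial.X (f t) : MvPolynomial α K) = MvPolynomial.monomial (occurrences f) 1 := by
  simp [occurrences, MvPolynomial.monomial_sum_one, MvPolynomial.X]

end Occurrences

theorem mem_span_prod_of_comp_perm_eq {K α : Type*} [Field K] [Infinite K] [Fintype α] {k : ℕ}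
    {ζ : (Fin k → α) → K} (hζ : ∀ (σ : Equiv.Perm (Fin k)) f, ζ (f ∘ σ) = ζ f) :
    ζ ∈ Submodule.span K (Set.range fun (Y : α → K) (f : Fin k → α) => ∏ t, Y (f t)) := by
  classical
  by_contra hnot
  obtain ⟨φ, hφζ, hφ⟩ := Submodule.exists_dual_map_eq_bot_of_notMem hnot inferInstance
  set w : (Fin k → α) → K := fun f => φ fun g => if f = g then 1 else 0
  have hφ_apply (χ : (Fin k → α) → K) : φ χ = ∑ f, χ f * w f := by
    simp [w, LinearMap.pi_apply_eq_sum_univ φ χ]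
  have hpoly : ∑ f, MvPolynomial.C (w f) * ∏ t, MvPolynomial.X (f t) =
      (0 : MvPolynomial α K) := by
    refine MvPolynomial.funext fun Y => ?_
    have : φ (fun f => ∏ t, Y (f t)) = 0 := by
      rw [← Submodule.mem_bot K, ← hφ]
      exact Submodule.mem_map_of_mem (Submodule.subset_span ⟨Y, rfl⟩)
    simpa [hφ_apply, mul_comm] using this
  have hfiber (μ : α →₀ ℕ) : ∑ f with occurrences f = μ, w f = 0 := by
    simpa [prod_X_comp_eq_monomial, MvPolynomial.C_mul_monomial, MvPolynomial.coeff_sum,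
      MvPolynomial.coeff_monomial, sum_filter] using congr_arg (MvPolynomial.coeff μ) hpoly
  refine hφζ ?_
  rw [hφ_apply, ← sum_fiberwise_of_maps_to fun f _ => mem_image_of_mem occurrences (mem_univ f)]
  refine sum_eq_zero fun μ hμ => ?_
  obtain ⟨g, -, rfl⟩ := mem_image.mp hμ
  have hζ_fiber : ∀ f ∈ ({f | occurrences f = occurrences g} : Finset _),
      ζ f * w f = ζ g * w f := fun f hf => by
    obtain ⟨σ, rfl⟩ := exists_perm_of_occurrences_eq (mem_filter.mp hf).2
    rw [hζ]
  rw [sum_congr rfl hζ_fiber, ← mul_sum, hfiber, mul_zero]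

namespace Representation

open MonoidAlgebra

variable {k G V : Type*} [Field k] [Group G] [Finite G] [NeZero (Nat.card G : k)]
  [AddCommGroup V] [Module k V] [FiniteDimensional k V]

theorem mem_span_range_of_commute_commutant (ρ : Representation k G V) {f : Module.End k V}
    (hf : ∀ g : Module.End k V, (∀ σ, Commute g (ρ σ)) → Commute f g) :
    f ∈ Submodule.span k (Set.range ρ) := by
  let e := ρ.asModuleEquiv
  have : Module.Finite (Module.End k[G] ρ.asModule) ρ.asModule :=
    .of_restrictScalars_finite k _ _
  let F : Module.End (Module.End k[G] ρ.asModule) ρ.asModule :=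
    { toFun := fun m => e.symm (f (e m))
      map_add' := by simp
      map_smul' := fun g m => by
        let g' : Module.End k V := e.toLinearMap ∘ₗ g.restrictScalars k ∘ₗ e.symm.toLinearMap
        have hg' (σ : G) : Commute g' (ρ σ) := by
          ext v
          change e (g (e.symm (ρ σ v))) = ρ σ (e (g (e.symm v)))
          rw [asModuleEquiv_symm_map_rho, map_smul, asModuleEquiv_map_smul, asAlgebraHom_of]
        simpa [g'] using congr_arg e.symm (LinearMap.congr_fun (hf g' hg').eq (e m)) }
  obtain ⟨r, hr⟩ := Module.Finite.toModuleEnd_moduleEnd_surjective F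
  have hrf : ρ.asAlgebraHom r = f := by
    ext v
    simpa [F, e, asModuleEquiv_map_smul] using congr_arg e (LinearMap.congr_fun hr (e.symm v))
  rw [← hrf, asAlgebraHom_def, lift_apply]
  exact Submodule.sum_mem _ fun σ _ => Submodule.smul_mem _ _ (Submodule.subset_span ⟨σ, rfl⟩)

end Representation

section TensorPow

variable {d k : ℕ}

lemma tensorPow_mul (Y Z : Matrix (Fin d) (Fin d) ℂ) :
    tensorPow d k (Y * Z) = tensorPow d k Y * tensorPow d k Z := by
  ext j i
  simp only [tensorPow, mul_apply, of_apply, prod_univ_sum, Fintype.piFinset_univ,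
    prod_mul_distrib]

lemma tensorPow_map {R : Type*} [CommSemiring R] (f : R →+* ℂ) (Φ : Matrix (Fin d) (Fin d) R) :
    tensorPow d k (Φ.map f) = (of fun j i => ∏ t, Φ (j t) (i t)).map f := by
  ext j i
  simp [tensorPow]

lemma permOp_mul_apply (π : Equiv.Perm (Fin k)) (A : Matrix (Fin k → Fin d) (Fin k → Fin d) ℂ)
    (j i : Fin k → Fin d) : (permOp d k π * A) j i = A (j ∘ π) i := by
  simp [permOp, mul_apply, Equiv.eq_comp_symm, eq_comm]

lemma mul_permOp_apply (π : Equiv.Perm (Fin k)) (A : Matrix (Fin k → Fin d) (Fin k → Fin d) ℂ)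
    (j i : Fin k → Fin d) : (A * permOp d k π) j i = A j (i ∘ π.symm) := by
  simp [permOp, mul_apply]

lemma permOp_commute_tensorPow (π : Equiv.Perm (Fin k)) (Y : Matrix (Fin d) (Fin d) ℂ) :
    Commute (permOp d k π) (tensorPow d k Y) := by
  ext j i
  rw [permOp_mul_apply, mul_permOp_apply]
  exact (Equiv.prod_comp π.symm _).symm.trans (by simp [tensorPow])

lemma permOp_mul (π σ : Equiv.Perm (Fin k)) :
    permOp d k (π * σ) = permOp d k π * permOp d k σ := by
  ext j i
  rw [permOp_mul_apply]
  simp [permOp, Equiv.eq_comp_symm, Function.comp_assoc]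

lemma permOp_one : permOp d k 1 = 1 := by
  ext j i
  simp [permOp, one_apply, Equiv.Perm.one_def]

end TensorPow

section UnitaryDensity

open scoped ComplexStarModule
open MvPolynomial (C eval)

variable {d k : ℕ} {X : Matrix (Fin k → Fin d) (Fin k → Fin d) ℂ}

lemma commute_tensorPow_eval_of_forall_mem_pi {σ : Type*} {s : σ → Set ℂ}
    (hs : ∀ i, (s i).Infinite) (Φ : Matrix (Fin d) (Fin d) (MvPolynomial σ ℂ))
    (h : ∀ x ∈ Set.univ.pi s, Commute X (tensorPow d k (Φ.map (eval x))))
    (x : σ → ℂ) : Commute X (tensorPow d k (Φ.map (eval x))) := by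
  set T : Matrix (Fin k → Fin d) (Fin k → Fin d) (MvPolynomial σ ℂ) :=
    of fun j i => ∏ t, Φ (j t) (i t)
  have heval (y : σ → ℂ) : (eval y).mapMatrix (X.map C * T - T * X.map C) =
      X * tensorPow d k (Φ.map (eval y)) - tensorPow d k (Φ.map (eval y)) * X := by
    have hX : (eval y).mapMatrix (X.map C) = X := by ext; simp
    rw [map_sub, map_mul, map_mul, hX, tensorPow_map, RingHom.mapMatrix_apply]
  have hzero : X.map C * T - T * X.map C = 0 := by
    refine Matrix.ext fun j i => MvPolynomial.funext_set s hs fun y hy => ?_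
    have := congr_fun₂ (heval y) j i
    rw [(h y hy).eq, sub_self] at this
    simpa using this
  exact sub_eq_zero.mp (by rw [← heval, hzero, map_zero])

lemma commute_tensorPow_unitary_conj
    (hX : ∀ U : unitaryGroup (Fin d) ℂ, Commute X (tensorPow d k U))
    (U : unitaryGroup (Fin d) ℂ) {D : Matrix (Fin d) (Fin d) ℂ}
    (hD : Commute X (tensorPow d k D)) : Commute X (tensorPow d k (U * D * star U)) := by
  rw [tensorPow_mul, tensorPow_mul]
  exact ((hX U).mul_right hD).mul_right (hX (star U))

lemma commute_tensorPow_diagonal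
    (hX : ∀ U : unitaryGroup (Fin d) ℂ, Commute X (tensorPow d k U))
    (z : Fin d → ℂ) : Commute X (tensorPow d k (diagonal z)) := by
  have hcircle : (Metric.sphere (0 : ℂ) 1).Infinite :=
    (isConnected_sphere (by simp) 0 zero_le_one).isPreconnected.infinite_of_nontrivial
      ⟨1, by simp, -1, by simp, by norm_num⟩
  have hmap (x : Fin d → ℂ) : (diagonal MvPolynomial.X).map (eval x) = diagonal x := by
    simp [diagonal_map]
  have hunitary (x : Fin d → ℂ) (hx : x ∈ Set.univ.pi fun _ => Metric.sphere 0 1) :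
      diagonal x ∈ unitaryGroup (Fin d) ℂ := by
    rw [mem_unitaryGroup_iff, star_eq_conjTranspose, diagonal_conjTranspose,
      diagonal_mul_diagonal, ← diagonal_one]
    congr 1
    funext i
    have hxi : ‖x i‖ = 1 := by simpa using hx i trivial
    simp [Complex.mul_conj', hxi]
  simpa [hmap] using commute_tensorPow_eval_of_forall_mem_pi (fun _ => hcircle)
    (diagonal MvPolynomial.X) (fun x hx => by rw [hmap]; exact hX ⟨_, hunitary x hx⟩) z

lemma commute_tensorPow_of_isHermitian
    (hX : ∀ U : unitaryGroup (Fin d) ℂ, Commute X (tensorPow d k U))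
    {H : Matrix (Fin d) (Fin d) ℂ} (hH : H.IsHermitian) : Commute X (tensorPow d k H) := by
  rw [hH.spectral_theorem, Unitary.conjStarAlgAut_apply]
  exact commute_tensorPow_unitary_conj hX _ (commute_tensorPow_diagonal hX _)

lemma commute_tensorPow_of_forall_unitary
    (hX : ∀ U : unitaryGroup (Fin d) ℂ, Commute X (tensorPow d k U))
    (Y : Matrix (Fin d) (Fin d) ℂ) : Commute X (tensorPow d k Y) := by
  set A : Matrix (Fin d) (Fin d) ℂ := (ℜ Y : Matrix (Fin d) (Fin d) ℂ)
  set B : Matrix (Fin d) (Fin d) ℂ := (ℑ Y : Matrix (Fin d) (Fin d) ℂ)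
  let Φ : Matrix (Fin d) (Fin d) (MvPolynomial Unit ℂ) :=
    A.map C + (MvPolynomial.X () : MvPolynomial Unit ℂ) • B.map C
  have hmap (x : Unit → ℂ) : Φ.map (eval x) = A + x () • B := by
    ext i j
    simp [Φ]
  have hreal : ∀ x ∈ Set.univ.pi fun _ => Set.range Complex.ofReal,
      Commute X (tensorPow d k (Φ.map (eval x))) := fun x hx => by
    obtain ⟨t, ht⟩ := hx () trivial
    refine hmap x ▸ commute_tensorPow_of_isHermitian hX ?_
    rw [← ht, isHermitian_iff_isSelfAdjoint, Complex.coe_smul]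
    exact (ℜ Y).2.add ((IsSelfAdjoint.all t).smul (ℑ Y).2)
  have := commute_tensorPow_eval_of_forall_mem_pi
    (fun _ => Set.infinite_range_of_injective Complex.ofReal_injective) Φ hreal fun _ => Complex.I
  rwa [hmap, realPart_add_I_smul_imaginaryPart] at this

end UnitaryDensity

section Commutant

variable {d k : ℕ}

def permRep (d k : ℕ) : Representation ℂ (Equiv.Perm (Fin k)) ((Fin k → Fin d) → ℂ) :=
  (toLinAlgEquiv' : Matrix (Fin k → Fin d) (Fin k → Fin d) ℂ ≃ₐ[ℂ] _).toMonoidHom.comp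
    { toFun := permOp d k, map_one' := permOp_one, map_mul' := permOp_mul }

lemma mem_span_tensorPow_of_commute_permOp {Z : Matrix (Fin k → Fin d) (Fin k → Fin d) ℂ}
    (hZ : ∀ π, Commute (permOp d k π) Z) : Z ∈ Submodule.span ℂ (Set.range (tensorPow d k)) := by
  let L : ((Fin k → Fin d × Fin d) → ℂ) →ₗ[ℂ] Matrix (Fin k → Fin d) (Fin k → Fin d) ℂ :=
    { toFun := fun χ => of fun j i => χ fun t => (j t, i t)
      map_add' := fun _ _ => rfl
      map_smul' := fun _ _ => rfl }
  have hsymm (π : Equiv.Perm (Fin k)) (f : Fin k → Fin d × Fin d) :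
      Z (Prod.fst ∘ f ∘ π) (Prod.snd ∘ f ∘ π) = Z (Prod.fst ∘ f) (Prod.snd ∘ f) := by
    have := congr_fun₂ (hZ π).eq (Prod.fst ∘ f) (Prod.snd ∘ f ∘ π)
    rw [permOp_mul_apply, mul_permOp_apply] at this
    simpa [Function.comp_assoc] using this
  have hmem := Submodule.mem_map_of_mem (f := L)
    (mem_span_prod_of_comp_perm_eq (ζ := fun f => Z (Prod.fst ∘ f) (Prod.snd ∘ f)) hsymm)
  rw [Submodule.map_span, ← Set.range_comp] at hmem
  exact Submodule.span_mono (by rintro _ ⟨Y, rfl⟩; exact ⟨of fun a b => Y (a, b), rfl⟩) hmem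

lemma commute_of_mem_span_tensorPow {X Z : Matrix (Fin k → Fin d) (Fin k → Fin d) ℂ}
    (hX : ∀ Y, Commute X (tensorPow d k Y))
    (hZ : Z ∈ Submodule.span ℂ (Set.range (tensorPow d k))) : Commute X Z := by
  have hspan : Submodule.span ℂ (Set.range (tensorPow d k)) ≤
      (Subalgebra.centralizer ℂ {X}).toSubmodule := Submodule.span_le.mpr <| by
    rintro _ ⟨Y, rfl⟩
    exact (Subalgebra.mem_centralizer_iff ℂ).mpr (by simpa using (hX Y).eq)
  exact (Subalgebra.mem_centralizer_iff ℂ).mp (hspan hZ) X rfl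

lemma mem_span_permOp_of_commute_tensorPow {X : Matrix (Fin k → Fin d) (Fin k → Fin d) ℂ}
    (hX : ∀ Y, Commute X (tensorPow d k Y)) : X ∈ Submodule.span ℂ (Set.range (permOp d k)) := by
  let e : Matrix (Fin k → Fin d) (Fin k → Fin d) ℂ ≃ₐ[ℂ] Module.End ℂ ((Fin k → Fin d) → ℂ) :=
    toLinAlgEquiv'
  have h := (permRep d k).mem_span_range_of_commute_commutant (f := e X) fun g hg => by
    have hgπ (π : Equiv.Perm (Fin k)) : Commute (permOp d k π) (e.symm g) := by
      have := ((hg π).map e.symm).symm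
      rwa [show permRep d k π = e (permOp d k π) from rfl, e.symm_apply_apply] at this
    simpa using (commute_of_mem_span_tensorPow hX (mem_span_tensorPow_of_commute_permOp hgπ)).map e
  rw [show (permRep d k : _ → _) = e.toLinearEquiv.toLinearMap ∘ permOp d k from rfl,
    Set.range_comp, Submodule.span_image] at h
  obtain ⟨Y, hY, hYX⟩ := h
  rwa [← e.injective hYX]

end Commutant

/-- An operator `X` on `(ℂ^d)^{⊗k}` commutes with `U^{⊗k}` for all unitaries `U` if and
only if `X` is a linear combination of permutation operators `W_π`, `π ∈ S_k`
(Schur–Weyl duality, unitary version; Theorem 7.16 of Watrous). -/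
theorem commutes_with_tensorPow_iff_permOp_span (d k : ℕ)
    (X : Matrix (Fin k → Fin d) (Fin k → Fin d) ℂ) :
    (∀ U : Matrix.unitaryGroup (Fin d) ℂ,
        X * tensorPow d k (U : Matrix (Fin d) (Fin d) ℂ) =
          tensorPow d k (U : Matrix (Fin d) (Fin d) ℂ) * X) ↔
    ∃ c : Equiv.Perm (Fin k) → ℂ, X = ∑ π : Equiv.Perm (Fin k), c π • permOp d k π := by
  constructor
  · intro hX
    obtain ⟨c, hc⟩ := (Submodule.mem_span_range_iff_exists_fun ℂ).mp
      (mem_span_permOp_of_commute_tensorPow (commute_tensorPow_of_forall_unitary hX))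
    exact ⟨c, hc.symm⟩
  · rintro ⟨c, rfl⟩ U
    exact Commute.sum_left _ _ _ fun π _ => (permOp_commute_tensorPow π _).smul_left (c π)
end

section
/- No ensemble of n-qubit Clifford unitaries is a unitary 4-design; in particular, the uniform distribution over the Clifford group is not a 4-design. -/
open Matrix MeasureTheory
open scoped Kronecker Classical

/-- The commutation exponent: `p q = (-1)^{F} q p` for Pauli operators `p = X^aZ^b`,
`q = X^cZ^e`. -/
def pauliCommQ (n : ℕ) (a b c e : Fin n → ZMod 2) : ZMod 2 :=
  (∑ i, b i * c i) - (∑ i, a i * e i)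

/-- An `n`-qubit Clifford unitary: a unitary normalizing the Pauli group up to phases. -/
def IsCliffordQ (n : ℕ) (U : Matrix (Fin n → ZMod 2) (Fin n → ZMod 2) ℂ) : Prop :=
  U ∈ Matrix.unitaryGroup (Fin n → ZMod 2) ℂ ∧
    ∀ a b : Fin n → ZMod 2, ∃ (z : ℂ) (c e : Fin n → ZMod 2),
      U * pauliQ n a b * Uᴴ = z • pauliQ n c e

/-- An ensemble is Pauli-invariant if it is closed (with equal weight) under right
multiplication by Pauli elements, up to a global phase. -/
def PauliInvariant (n : ℕ) {ι : Type} [Fintype ι] (α : ι → ℝ)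
    (U : ι → Matrix (Fin n → ZMod 2) (Fin n → ZMod 2) ℂ) : Prop :=
  ∀ (t : ι) (a b : Fin n → ZMod 2), ∃ (s : ι) (θ : ℝ),
    α s = α t ∧ U s = Complex.exp (θ * Complex.I) • (U t * pauliQ n a b)

/-- An ensemble is Pauli mixing if it maps each non-identity Pauli element to the
uniform distribution over the `2(4^n - 1)` signed non-identity Pauli elements. -/
def PauliMixingQ (n : ℕ) {ι : Type} [Fintype ι] (α : ι → ℝ)
    (U : ι → Matrix (Fin n → ZMod 2) (Fin n → ZMod 2) ℂ) : Prop :=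
  ∀ a b : Fin n → ZMod 2, (a, b) ≠ (0, 0) →
    ∀ ε : ℂ, (ε = 1 ∨ ε = -1) → ∀ c e : Fin n → ZMod 2, (c, e) ≠ (0, 0) →
      (∑ t ∈ Finset.univ.filter (fun t =>
          U t * pauliQ n a b * (U t)ᴴ = ε • pauliQ n c e), α t)
        = 1 / (2 * ((4 : ℝ) ^ n - 1))

/-- An ensemble is Pauli 2-mixing if it maps each ordered pair of distinct non-identity
Pauli elements to the uniform distribution over `H_{F(p₁,p₂)}`, the set of pairs of
non-proportional signed non-identity Pauli elements with the same commutation relation,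
with `|H_0| = 2(4^n-1)(4^n-4)` and `|H_1| = 2·4^n(4^n-1)`. -/
def Pauli2MixingQ (n : ℕ) {ι : Type} [Fintype ι] (α : ι → ℝ)
    (U : ι → Matrix (Fin n → ZMod 2) (Fin n → ZMod 2) ℂ) : Prop :=
  ∀ a₁ b₁ a₂ b₂ : Fin n → ZMod 2, (a₁, b₁) ≠ (0, 0) → (a₂, b₂) ≠ (0, 0) →
    (a₁, b₁) ≠ (a₂, b₂) →
    ∀ ε₁ ε₂ : ℂ, (ε₁ = 1 ∨ ε₁ = -1) → (ε₂ = 1 ∨ ε₂ = -1) →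
    ∀ c₁ e₁ c₂ e₂ : Fin n → ZMod 2,
      (c₁, e₁) ≠ (0, 0) → (c₂, e₂) ≠ (0, 0) → (c₁, e₁) ≠ (c₂, e₂) →
      pauliCommQ n c₁ e₁ c₂ e₂ = pauliCommQ n a₁ b₁ a₂ b₂ →
      (∑ t ∈ Finset.univ.filter (fun t =>
          U t * pauliQ n a₁ b₁ * (U t)ᴴ = ε₁ • pauliQ n c₁ e₁ ∧
          U t * pauliQ n a₂ b₂ * (U t)ᴴ = ε₂ • pauliQ n c₂ e₂), α t)
        = if pauliCommQ n a₁ b₁ a₂ b₂ = 0 then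
            1 / (2 * ((4 : ℝ) ^ n - 1) * ((4 : ℝ) ^ n - 4))
          else 1 / (2 * (4 : ℝ) ^ n * ((4 : ℝ) ^ n - 1))


/-!
Left-translating the Haar measure by the diagonal unitary `W` with entry `e^{iπ/4}` at a basis
vector `d ≠ 0` (and `1` elsewhere) multiplies the `((d,d,d,d),(0,0,0,0))` entry of the 4-fold
twirl by `W_dd^4 = -1`, so this entry of the Haar twirl vanishes. For `X = p^{⊗4}` with `p` a
Pauli operator, the same entry of the Clifford twirl is the total weight of the members sending
`p` to `±X^d Z^e`, as `(z i^k)^4 = 1` whenever `z² = 1`. Hence every member of positive weight of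
a Clifford 4-design sends every Pauli operator to a diagonal one. Diagonal matrices commute, but
conjugation preserves the anticommutation of `X₁` and `Z₁`.
-/

section Twirl

variable {m : Type*} [Fintype m] [DecidableEq m]

def tensorPow4 (A : Matrix m m ℂ) : Matrix (m × m × m × m) (m × m × m × m) ℂ :=
  A ⊗ₖ (A ⊗ₖ (A ⊗ₖ A))

def twirl4 (V : Matrix m m ℂ) (X : Matrix (m × m × m × m) (m × m × m × m) ℂ) :
    Matrix (m × m × m × m) (m × m × m × m) ℂ :=
  tensorPow4 V * X * (tensorPow4 V)ᴴ

def IsUnitary4Design [MeasurableSpace (unitaryGroup m ℂ)] (η : Measure (unitaryGroup m ℂ))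
    {ι : Type*} [Fintype ι] (α : ι → ℝ) (U : ι → Matrix m m ℂ) : Prop :=
  ∀ X j i, ∑ t, (α t : ℂ) * twirl4 (U t) X j i =
    ∫ V : unitaryGroup m ℂ, twirl4 (V : Matrix m m ℂ) X j i ∂η

omit [Fintype m] [DecidableEq m] in
theorem tensorPow4_apply_diag (A : Matrix m m ℂ) (j i : m) :
    tensorPow4 A (j, j, j, j) (i, i, i, i) = A j i ^ 4 := by
  simp only [tensorPow4, kroneckerMap_apply]; ring

omit [DecidableEq m] in
theorem tensorPow4_mul (A B : Matrix m m ℂ) :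
    tensorPow4 (A * B) = tensorPow4 A * tensorPow4 B := by
  simp only [tensorPow4, mul_kronecker_mul]

omit [Fintype m] [DecidableEq m] in
theorem conjTranspose_tensorPow4 (A : Matrix m m ℂ) : (tensorPow4 A)ᴴ = tensorPow4 Aᴴ := by
  simp only [tensorPow4, conjTranspose_kronecker]

omit [Fintype m] in
theorem tensorPow4_diagonal (w : m → ℂ) :
    tensorPow4 (diagonal w) = diagonal fun x => w x.1 * (w x.2.1 * (w x.2.2.1 * w x.2.2.2)) := by
  simp only [tensorPow4, diagonal_kronecker_diagonal]

omit [DecidableEq m] in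
theorem twirl4_tensorPow4 (V p : Matrix m m ℂ) :
    twirl4 V (tensorPow4 p) = tensorPow4 (V * p * Vᴴ) := by
  rw [twirl4, conjTranspose_tensorPow4, tensorPow4_mul, tensorPow4_mul]

theorem twirl4_diagonal_mul_apply (w : m → ℂ) (V : Matrix m m ℂ)
    (X : Matrix (m × m × m × m) (m × m × m × m) ℂ) (j i : m × m × m × m) :
    twirl4 (diagonal w * V) X j i =
      w j.1 * (w j.2.1 * (w j.2.2.1 * w j.2.2.2)) * twirl4 V X j i *
        star (w i.1 * (w i.2.1 * (w i.2.2.1 * w i.2.2.2))) := by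
  have : twirl4 (diagonal w * V) X =
      tensorPow4 (diagonal w) * twirl4 V X * (tensorPow4 (diagonal w))ᴴ := by
    simp only [twirl4, tensorPow4_mul, conjTranspose_mul, Matrix.mul_assoc]
  rw [this, tensorPow4_diagonal, diagonal_conjTranspose, mul_diagonal, diagonal_mul]
  rfl

theorem diagonal_mem_unitaryGroup {w : m → ℂ} (hw : ∀ x, w x * star (w x) = 1) :
    diagonal w ∈ unitaryGroup m ℂ := by
  rw [mem_unitaryGroup_iff, star_eq_conjTranspose, diagonal_conjTranspose,
    diagonal_mul_diagonal]
  exact (congrArg diagonal (funext hw)).trans diagonal_one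

theorem integral_twirl4_apply_eq_zero [MeasurableSpace (unitaryGroup m ℂ)]
    [BorelSpace (unitaryGroup m ℂ)] (η : Measure (unitaryGroup m ℂ)) [η.IsMulLeftInvariant]
    (X : Matrix (m × m × m × m) (m × m × m × m) ℂ) {d x : m} (hdx : d ≠ x) :
    ∫ V : unitaryGroup m ℂ, twirl4 (V : Matrix m m ℂ) X (d, d, d, d) (x, x, x, x) ∂η = 0 := by
  set w : m → ℂ := fun y => Complex.exp ((if y = d then Real.pi / 4 else 0 : ℝ) * Complex.I)
  have hw : ∀ y, w y * star (w y) = 1 := fun y => by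
    rw [Complex.star_def, Complex.mul_conj, Complex.normSq_eq_norm_sq,
      Complex.norm_exp_ofReal_mul_I]
    norm_num
  have hwd : w d ^ 4 = -1 := by
    simp only [w, ← Complex.exp_nat_mul, ← Complex.exp_pi_mul_I]
    push_cast; ring_nf
  have hwx : w x = 1 := by simp [w, hdx.symm]
  refine integral_eq_zero_of_mul_left_eq_neg (g := ⟨diagonal w, diagonal_mem_unitaryGroup hw⟩)
    fun V => ?_
  rw [Submonoid.coe_mul, twirl4_diagonal_mul_apply]
  simp only [hwx, star_one, mul_one]
  linear_combination (twirl4 (V : Matrix m m ℂ) X (d, d, d, d) (x, x, x, x)) * hwd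

end Twirl

theorem commute_of_commute_conj_unitary {A : Type*} [Ring A] [StarMul A] {u p q : A}
    (hu : u ∈ unitary A) (h : Commute (u * p * star u) (u * q * star u)) : Commute p q := by
  have hback : ∀ x, star u * (u * x * star u) * u = x := fun x => by
    rw [← mul_assoc, ← mul_assoc, Unitary.star_mul_self_of_mem hu, one_mul, mul_assoc,
      Unitary.star_mul_self_of_mem hu, mul_one]
  have := h.map (Unitary.conjStarAlgAut ℕ A ⟨u, hu⟩).symm
  simp only [Unitary.conjStarAlgAut_symm_apply] at this
  rwa [hback, hback] at this

section Pauli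

variable {n : ℕ}

theorem pauliQ_zero_left (e : Fin n → ZMod 2) :
    pauliQ n 0 e = diagonal fun j => (-1 : ℂ) ^ ∑ i, (e i).val * (j i).val := by
  ext k j
  by_cases hkj : k = j
  · subst hkj; simp [pauliQ]
  · simp [pauliQ, hkj]

theorem pauliQ_zero_right_apply (a k j : Fin n → ZMod 2) :
    pauliQ n a 0 k j = if k = j + a then 1 else 0 := by
  simp [pauliQ]

theorem pauliQ_apply_zero (a b d : Fin n → ZMod 2) :
    pauliQ n a b d 0 = if d = a then Complex.I ^ ∑ i, (a i).val * (b i).val else 0 := by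
  simp [pauliQ]

theorem pauliQ_mul_self (a b : Fin n → ZMod 2) : pauliQ n a b * pauliQ n a b = 1 := by
  have haa : a + a = 0 := funext fun i => CharTwo.add_self_eq_zero (a i)
  ext k j
  rw [mul_apply, Finset.sum_eq_single (j + a) (fun l _ hl => by simp [pauliQ, hl]) (by simp)]
  by_cases hkj : k = j
  · subst hkj
    set m := ∑ i, (a i).val * (b i).val
    set B := ∑ i, (b i).val * ((k + a) i).val + ∑ i, (b i).val * (k i).val
    have heven : Even (m + B) := by
      rw [← ZMod.natCast_eq_zero_iff_even]
      push_cast [m, B, ZMod.natCast_zmod_val]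
      simp only [Pi.add_apply, ← Finset.sum_add_distrib]
      refine Finset.sum_eq_zero fun i _ => ?_
      generalize a i = x, b i = y, k i = z
      revert x y z; decide
    simp only [pauliQ, of_apply, add_assoc, haa, add_zero, if_true, one_apply_eq]
    calc _ = (Complex.I ^ 2) ^ m * (-1 : ℂ) ^ B := by ring
      _ = 1 := by rw [Complex.I_sq, ← pow_add, heven.neg_one_pow]
  · simp [pauliQ, add_assoc, haa, hkj, one_apply_ne hkj]

theorem not_commute_pauliQ {a b : Fin n → ZMod 2} (hab : ∑ i, a i * b i = 1) :
    ¬ Commute (pauliQ n a 0) (pauliQ n 0 b) := by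
  intro h
  have hentry := congrFun₂ h.eq a 0
  rw [pauliQ_zero_left, mul_diagonal, diagonal_mul, pauliQ_zero_right_apply] at hentry
  have hodd : Odd (∑ i, (b i).val * (a i).val) := by
    rw [← ZMod.natCast_eq_one_iff_odd, ← hab]
    push_cast [ZMod.natCast_zmod_val]
    simp only [mul_comm]
  norm_num [hodd.neg_one_pow] at hentry

theorem IsCliffordQ.exists_conj_pauliQ {U : Matrix (Fin n → ZMod 2) (Fin n → ZMod 2) ℂ}
    (hU : IsCliffordQ n U) (a b : Fin n → ZMod 2) :
    ∃ (z : ℂ) (c e : Fin n → ZMod 2), z ^ 2 = 1 ∧ U * pauliQ n a b * Uᴴ = z • pauliQ n c e := by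
  obtain ⟨z, c, e, h⟩ := hU.2 a b
  refine ⟨z, c, e, ?_, h⟩
  have hsq := map_mul (Unitary.conjStarAlgAut ℂ _ ⟨U, hU.1⟩) (pauliQ n a b) (pauliQ n a b)
  simp only [pauliQ_mul_self, map_one, Unitary.conjStarAlgAut_apply] at hsq
  rw [← star_eq_conjTranspose] at h
  rw [h, smul_mul_smul_comm, pauliQ_mul_self, ← sq] at hsq
  simpa using congrFun₂ hsq.symm 0 0

theorem smul_pauliQ_apply_zero_pow_four {z : ℂ} (hz : z ^ 2 = 1) (c e d : Fin n → ZMod 2) :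
    (z • pauliQ n c e) d 0 ^ 4 = if d = c then 1 else 0 := by
  rw [Matrix.smul_apply, pauliQ_apply_zero]
  split_ifs
  · rw [smul_eq_mul, mul_pow, ← pow_mul, mul_comm _ 4, pow_mul, Complex.I_pow_four, one_pow,
      show z ^ 4 = (z ^ 2) ^ 2 by ring, hz, one_pow, one_mul]
  · simp

end Pauli

theorem IsUnitary4Design.exists_conj_pauliQ_eq_smul_diagonal {n : ℕ}
    [MeasurableSpace (unitaryGroup (Fin n → ZMod 2) ℂ)]
    [BorelSpace (unitaryGroup (Fin n → ZMod 2) ℂ)]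
    {η : Measure (unitaryGroup (Fin n → ZMod 2) ℂ)} [η.IsMulLeftInvariant]
    {ι : Type*} [Fintype ι] {α : ι → ℝ} {U : ι → Matrix (Fin n → ZMod 2) (Fin n → ZMod 2) ℂ}
    (hdesign : IsUnitary4Design η α U) (hα : ∀ t, 0 ≤ α t) (hcliff : ∀ t, IsCliffordQ n (U t))
    {t : ι} (hαt : α t ≠ 0) (a b : Fin n → ZMod 2) :
    ∃ (z : ℂ) (e : Fin n → ZMod 2), U t * pauliQ n a b * (U t)ᴴ = z • pauliQ n 0 e := by
  choose z c e hz hrep using fun s => (hcliff s).exists_conj_pauliQ a b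
  suffices hc : c t = 0 from ⟨z t, e t, hc ▸ hrep t⟩
  by_contra hc
  have hentry := hdesign (tensorPow4 (pauliQ n a b)) (c t, c t, c t, c t) (0, 0, 0, 0)
  rw [integral_twirl4_apply_eq_zero η _ hc] at hentry
  simp only [twirl4_tensorPow4, tensorPow4_apply_diag, hrep,
    smul_pauliQ_apply_zero_pow_four (hz _), mul_ite, mul_one, mul_zero] at hentry
  rw [← Finset.sum_filter, ← Complex.ofReal_sum, Complex.ofReal_eq_zero,
    Finset.sum_eq_zero_iff_of_nonneg fun s _ => hα s] at hentry
  exact hαt (hentry t (by simp))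

theorem clifford_ensemble_not_4design_general (n : ℕ) (hn : 1 ≤ n)
    [MeasurableSpace (Matrix.unitaryGroup (Fin n → ZMod 2) ℂ)]
    [BorelSpace (Matrix.unitaryGroup (Fin n → ZMod 2) ℂ)]
    (η : Measure (Matrix.unitaryGroup (Fin n → ZMod 2) ℂ))
    [η.IsHaarMeasure]
    {ι : Type} [Fintype ι] (α : ι → ℝ) (hα : ∀ t, 0 ≤ α t) (hsum : ∑ t, α t = 1)
    (U : ι → Matrix (Fin n → ZMod 2) (Fin n → ZMod 2) ℂ)
    (hcliff : ∀ t, IsCliffordQ n (U t)) :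
    ¬ (∀ (X : Matrix
          ((Fin n → ZMod 2) × (Fin n → ZMod 2) × (Fin n → ZMod 2) × (Fin n → ZMod 2))
          ((Fin n → ZMod 2) × (Fin n → ZMod 2) × (Fin n → ZMod 2) × (Fin n → ZMod 2)) ℂ)
        (j i : (Fin n → ZMod 2) × (Fin n → ZMod 2) × (Fin n → ZMod 2) × (Fin n → ZMod 2)),
      (∑ t, (α t : ℂ) *
          ((U t ⊗ₖ (U t ⊗ₖ (U t ⊗ₖ U t))) * X * (U t ⊗ₖ (U t ⊗ₖ (U t ⊗ₖ U t)))ᴴ) j i) =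
      ∫ V : Matrix.unitaryGroup (Fin n → ZMod 2) ℂ,
        (((V : Matrix (Fin n → ZMod 2) (Fin n → ZMod 2) ℂ) ⊗ₖ
            ((V : Matrix (Fin n → ZMod 2) (Fin n → ZMod 2) ℂ) ⊗ₖ
              ((V : Matrix (Fin n → ZMod 2) (Fin n → ZMod 2) ℂ) ⊗ₖ
                (V : Matrix (Fin n → ZMod 2) (Fin n → ZMod 2) ℂ)))) * X *
          ((V : Matrix (Fin n → ZMod 2) (Fin n → ZMod 2) ℂ) ⊗ₖ
            ((V : Matrix (Fin n → ZMod 2) (Fin n → ZMod 2) ℂ) ⊗ₖ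
              ((V : Matrix (Fin n → ZMod 2) (Fin n → ZMod 2) ℂ) ⊗ₖ
                (V : Matrix (Fin n → ZMod 2) (Fin n → ZMod 2) ℂ))))ᴴ) j i ∂η) := by
  intro h
  have hdesign : IsUnitary4Design η α U := h
  obtain ⟨t, -, hαt⟩ := Finset.exists_ne_zero_of_sum_ne_zero (hsum ▸ one_ne_zero)
  have hdiag := hdesign.exists_conj_pauliQ_eq_smul_diagonal hα hcliff hαt
  let a : Fin n → ZMod 2 := Pi.single ⟨0, hn⟩ 1
  obtain ⟨z₁, e₁, hX⟩ := hdiag a 0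
  obtain ⟨z₂, e₂, hZ⟩ := hdiag 0 a
  refine not_commute_pauliQ (a := a) (b := a) (by simp [a, Pi.single_apply]) <|
    commute_of_commute_conj_unitary (hcliff t).1 ?_
  rw [← star_eq_conjTranspose] at hX hZ
  rw [hX, hZ, pauliQ_zero_left, pauliQ_zero_left]
  exact ((commute_diagonal _ _).smul_left _).smul_right _

/-- No ensemble of `n`-qubit Clifford unitaries (`n ≥ 1`) is a unitary 4-design: the
4-fold twirl by the ensemble cannot agree with the 4-fold Haar twirl on all operators on
`(ℂ^{2^n})^{⊗4}`.  In particular, the uniform distribution over the Clifford group is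
not a 4-design. -/
theorem clifford_ensemble_not_4design (n : ℕ) (hn : 1 ≤ n)
    [MeasurableSpace (Matrix.unitaryGroup (Fin n → ZMod 2) ℂ)]
    [BorelSpace (Matrix.unitaryGroup (Fin n → ZMod 2) ℂ)]
    (η : Measure (Matrix.unitaryGroup (Fin n → ZMod 2) ℂ))
    [η.IsHaarMeasure] [IsProbabilityMeasure η]
    {ι : Type} [Fintype ι] (α : ι → ℝ) (hα : ∀ t, 0 ≤ α t) (hsum : ∑ t, α t = 1)
    (U : ι → Matrix (Fin n → ZMod 2) (Fin n → ZMod 2) ℂ)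
    (hcliff : ∀ t, IsCliffordQ n (U t)) :
    ¬ (∀ (X : Matrix
          ((Fin n → ZMod 2) × (Fin n → ZMod 2) × (Fin n → ZMod 2) × (Fin n → ZMod 2))
          ((Fin n → ZMod 2) × (Fin n → ZMod 2) × (Fin n → ZMod 2) × (Fin n → ZMod 2)) ℂ)
        (j i : (Fin n → ZMod 2) × (Fin n → ZMod 2) × (Fin n → ZMod 2) × (Fin n → ZMod 2)),
      (∑ t, (α t : ℂ) *
          ((U t ⊗ₖ (U t ⊗ₖ (U t ⊗ₖ U t))) * X * (U t ⊗ₖ (U t ⊗ₖ (U t ⊗ₖ U t)))ᴴ) j i) =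
      ∫ V : Matrix.unitaryGroup (Fin n → ZMod 2) ℂ,
        (((V : Matrix (Fin n → ZMod 2) (Fin n → ZMod 2) ℂ) ⊗ₖ
            ((V : Matrix (Fin n → ZMod 2) (Fin n → ZMod 2) ℂ) ⊗ₖ
              ((V : Matrix (Fin n → ZMod 2) (Fin n → ZMod 2) ℂ) ⊗ₖ
                (V : Matrix (Fin n → ZMod 2) (Fin n → ZMod 2) ℂ)))) * X *
          ((V : Matrix (Fin n → ZMod 2) (Fin n → ZMod 2) ℂ) ⊗ₖ
            ((V : Matrix (Fin n → ZMod 2) (Fin n → ZMod 2) ℂ) ⊗ₖ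
              ((V : Matrix (Fin n → ZMod 2) (Fin n → ZMod 2) ℂ) ⊗ₖ
                (V : Matrix (Fin n → ZMod 2) (Fin n → ZMod 2) ℂ))))ᴴ) j i ∂η) :=
  clifford_ensemble_not_4design_general n hn η α hα hsum U hcliff
end
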